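/- For any two DIMEs E and E': L(E) = L(E') if and only if Δ_E = Δ_{E'} (i.e., C_E = C_{E'}, N_E = N_{E'}, P_E = P_{E'}, and K_E = K_{E'}). -/

import Mathlib

set_option autoImplicit false

universe u v w

/-- An unordered word over an alphabet `σ`: a multiset over `σ`,
viewed as a function giving the number of occurrences of each symbol. -/
def UWord (σ : Type u) : Type u := σ → ℕ

/-- The empty unordered word `ε`. -/
def UWord.zero {σ : Type u} : UWord σ := fun _ => 0

/-- Unordered concatenation (multiset union) of two unordered words. -/
def UWord.add {σ : Type u} (w₁ w₂ : UWord σ) : UWord σ := fun a => w₁ a + w₂ a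

/-- The unordered word consisting of a single occurrence of `a`. -/
def UWord.single {σ : Type u} [DecidableEq σ] (a : σ) : UWord σ :=
  fun b => if b = a then 1 else 0

/-- Unordered concatenation of a list of unordered words. -/
def listSum {σ : Type u} (l : List (UWord σ)) : UWord σ := l.foldr UWord.add UWord.zero

/-- An interval multiplicity `[lo,hi]` (with `hi ∈ ℕ ∪ {∞}`), where the flag
`opt` marks the variant `[lo,hi]?` that additionally allows zero iterations. -/
structure Iv : Type where
  lo : ℕ
  hi : ℕ∞
  opt : Bool

/-- Membership of a number of iterations in the set denoted by an interval multiplicity. -/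
def Iv.Mem (I : Iv) (n : ℕ) : Prop :=
  (I.lo ≤ n ∧ (n : ℕ∞) ≤ I.hi) ∨ (I.opt = true ∧ n = 0)

/-- The multiplicity `1 = [1,1]`. -/
def Iv.one : Iv := ⟨1, 1, false⟩
/-- The multiplicity `? = [0,1]`. -/
def Iv.qmark : Iv := ⟨0, 1, false⟩
/-- The multiplicity `+ = [1,∞]`. -/
def Iv.iplus : Iv := ⟨1, ⊤, false⟩
/-- The multiplicity `* = [0,∞]`. -/
def Iv.istar : Iv := ⟨0, ⊤, false⟩

/-- An atom `(a₁^{I₁} || ⋯ || a_k^{I_k})`: a list of symbols, each with a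
multiplicity `1` (flag `true`) or `?` (flag `false`). -/
abbrev Atom (σ : Type u) : Type u := List (σ × Bool)

/-- A clause `(A₁^{I₁} | ⋯ | A_k^{I_k})`: a list of atoms with interval multiplicities. -/
abbrev Clause (σ : Type u) : Type u := List (Atom σ × Iv)

/-- A disjunctive interval multiplicity expression `(D₁^{I₁} || ⋯ || D_k^{I_k})`
(as raw syntax; well-formedness is `DIME.WF`). -/
structure DIME (σ : Type u) : Type u where
  clauses : List (Clause σ × Iv)

/-- Language of a single symbol with its multiplicity (`1` or `?`) inside an atom. -/
def atomEntryLang {σ : Type u} [DecidableEq σ] (p : σ × Bool) : Set (UWord σ) :=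
  if p.2 = true then {UWord.single p.1} else {UWord.single p.1, UWord.zero}

/-- Unordered concatenation of the languages of the items of a list. -/
def listConcLang {σ : Type u} {α : Type v} (f : α → Set (UWord σ)) :
    List α → Set (UWord σ)
  | [] => {UWord.zero}
  | x :: xs => {w | ∃ w₁ ∈ f x, ∃ w₂ ∈ listConcLang f xs, w = w₁.add w₂}

/-- The language of an atom. -/
def Atom.lang {σ : Type u} [DecidableEq σ] (A : Atom σ) : Set (UWord σ) :=
  listConcLang atomEntryLang A

/-- The language `L(E^I)` obtained by iterating a language `L` according to
an interval multiplicity `I`. -/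
def iterLang {σ : Type u} (L : Set (UWord σ)) (I : Iv) : Set (UWord σ) :=
  {w | (∃ l : List (UWord σ),
          (∀ x ∈ l, x ∈ L) ∧ I.lo ≤ l.length ∧ (l.length : ℕ∞) ≤ I.hi ∧ w = listSum l) ∨
       (I.opt = true ∧ w = UWord.zero)}

/-- The language of a clause: disjunction of its atoms with intervals. -/
def Clause.lang {σ : Type u} [DecidableEq σ] (D : Clause σ) : Set (UWord σ) :=
  {w | ∃ p ∈ D, w ∈ iterLang (Atom.lang p.1) p.2}

/-- The language of a DIME: the unordered concatenation of its clauses with intervals. -/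
def DIME.lang {σ : Type u} [DecidableEq σ] (E : DIME σ) : Set (UWord σ) :=
  listConcLang (fun p => iterLang (Clause.lang p.1) p.2) E.clauses

/-- A clause is simple if all its atoms carry multiplicity `1` or `?`. -/
def Clause.Simple {σ : Type u} (D : Clause σ) : Prop :=
  ∀ p ∈ D, p.2 = Iv.one ∨ p.2 = Iv.qmark

/-- The list of all symbol occurrences in a DIME. -/
def DIME.symbols {σ : Type u} (E : DIME σ) : List σ :=
  E.clauses.flatMap fun p => p.1.flatMap fun q => q.1.map Prod.fst

/-- Well-formedness of a DIME `(D₁^{I₁} || ⋯ || D_k^{I_k})`: each `D_i` is either a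
simple clause with `I_i ∈ {+,*}`, or a clause with `I_i ∈ {1,?}`; moreover no symbol
occurs twice in the whole expression. -/
def DIME.WF {σ : Type u} (E : DIME σ) : Prop :=
  (∀ p ∈ E.clauses,
      (Clause.Simple p.1 ∧ (p.2 = Iv.iplus ∨ p.2 = Iv.istar)) ∨
      (p.2 = Iv.one ∨ p.2 = Iv.qmark)) ∧
  E.symbols.Nodup

/-- Conflicting pairs of siblings `C_E` of a language of unordered words. -/
def Cset {σ : Type u} (L : Set (UWord σ)) : Set (σ × σ) :=
  {p | ∀ w ∈ L, ¬(w p.1 ≠ 0 ∧ w p.2 ≠ 0)}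

/-- Extended cardinality map `N_E` of a language of unordered words. -/
def Nset {σ : Type u} (L : Set (UWord σ)) : Set (σ × ℕ) :=
  {p | ∃ w ∈ L, w p.1 = p.2}

/-- Collections of required symbols `P_E` of a language of unordered words. -/
def Pset {σ : Type u} (L : Set (UWord σ)) : Set (Set σ) :=
  {X | ∀ w ∈ L, ∃ a ∈ X, w a ≠ 0}

/-- Counting dependencies `K_E` of a language of unordered words. -/
def Kset {σ : Type u} (L : Set (UWord σ)) : Set (σ × σ) :=
  {p | ∀ w ∈ L, w p.2 ≤ w p.1}

/-- Satisfaction `w ⊨ Δ_E` of the characterizing tuple `(C_E, N_E, P_E, K_E)`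
of the language `L = L(E)` by an unordered word `w`. -/
def SatTuple {σ : Type u} (L : Set (UWord σ)) (w : UWord σ) : Prop :=
  (∀ p ∈ Cset L, ¬(w p.1 ≠ 0 ∧ w p.2 ≠ 0)) ∧
  (∀ a : σ, (a, w a) ∈ Nset L) ∧
  (∀ X ∈ Pset L, ∃ a ∈ X, w a ≠ 0) ∧
  (∀ p ∈ Kset L, w p.2 ≤ w p.1)

/-- Subsumption `Δ_{E'} ≼ Δ_E` of characterizing tuples, for `L' = L(E')` and `L = L(E)`:
`C_E ⊆ C_{E'}`, `N_{E'} ⊆ N_E`, `P_E ⊆ P_{E'}`, and `K_E ⊆ K_{E'}`. -/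
def TupleLE {σ : Type u} (L' L : Set (UWord σ)) : Prop :=
  Cset L ⊆ Cset L' ∧ Nset L' ⊆ Nset L ∧ Pset L ⊆ Pset L' ∧ Kset L ⊆ Kset L'

/-!
Every word of a language `L` satisfies its tuple `Δ_L`, and satisfying `Δ_L` depends on `L` only
through `Δ_L`; so it suffices that every word satisfying `Δ_{L(E)}` lies in `L(E)`. As the clauses
of a DIME use pairwise disjoint symbols, `L(E)` is the product of the clause languages and
satisfaction passes to the restriction of the word to each clause. The empty word is handled by
`P` applied to the whole alphabet. A nonempty word of `D^1` or `D^?` is confined by `C` to the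
symbols of one atom; `K` makes its required symbols occur equally often and at least as often as
its optional ones, and `N` applied to a pivot symbol of the atom yields an admissible number of
iterations. In a simple clause under `+` or `*` the atoms are iterated independently, so there `K`
alone decides membership.
-/

namespace UWord

variable {σ : Type*}

def Supported (w : UWord σ) (s : List σ) : Prop := ∀ a, w a ≠ 0 → a ∈ s

theorem eq_zero_iff {w : UWord σ} : w = UWord.zero ↔ ∀ a, w a = 0 :=
  ⟨fun h _ => h ▸ rfl, funext⟩

theorem exists_ne_zero_of_ne_zero {w : UWord σ} (hw : w ≠ UWord.zero) : ∃ a, w a ≠ 0 := by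
  simpa [eq_zero_iff] using hw

theorem supported_zero (s : List σ) : (UWord.zero : UWord σ).Supported s :=
  fun _ h => absurd rfl h

theorem Supported.add {w₁ w₂ : UWord σ} {s₁ s₂ : List σ} (h₁ : w₁.Supported s₁)
    (h₂ : w₂.Supported s₂) : (w₁.add w₂).Supported (s₁ ++ s₂) := by
  intro a ha
  by_cases h : w₁ a = 0
  · exact List.mem_append_right _ (h₂ a fun h' => ha (by simp [UWord.add, h, h']))
  · exact List.mem_append_left _ (h₁ a h)

theorem Supported.mono {w : UWord σ} {s t : List σ} (h : w.Supported s) (hst : s ⊆ t) :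
    w.Supported t :=
  fun a ha => hst (h a ha)

variable [DecidableEq σ]

def restrict (w : UWord σ) (s : List σ) : UWord σ := fun a => if a ∈ s then w a else 0

@[simp]
theorem restrict_apply (w : UWord σ) (s : List σ) (a : σ) :
    w.restrict s a = if a ∈ s then w a else 0 := rfl

theorem supported_restrict (w : UWord σ) (s : List σ) : (w.restrict s).Supported s := by
  intro a ha
  by_contra h
  simp [h] at ha

end UWord

section ListSum

variable {σ : Type*}

theorem listSum_apply (l : List (UWord σ)) (a : σ) :
    listSum l a = (l.map fun x => x a).sum := by
  induction l with
  | nil => rfl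
  | cons x l ih => simp only [List.map_cons, List.sum_cons, ← ih]; rfl

theorem listSum_append (l₁ l₂ : List (UWord σ)) :
    listSum (l₁ ++ l₂) = (listSum l₁).add (listSum l₂) := by
  funext a
  simp [listSum_apply, UWord.add]

theorem supported_listSum {l : List (UWord σ)} {s : List σ} (h : ∀ x ∈ l, x.Supported s) :
    (listSum l).Supported s := by
  intro a ha
  rw [listSum_apply] at ha
  obtain ⟨_, hx, hxa⟩ := List.exists_mem_ne_zero_of_sum_ne_zero ha
  obtain ⟨x, hxl, rfl⟩ := List.mem_map.1 hx
  exact h x hxl a hxa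

end ListSum

section IterLang

variable {σ : Type*} {L L' : Set (UWord σ)} {I : Iv} {w : UWord σ}

theorem mem_iterLang_iff :
    w ∈ iterLang L I ↔ ∃ l : List (UWord σ), (∀ x ∈ l, x ∈ L) ∧ I.Mem l.length ∧ w = listSum l := by
  constructor
  · rintro (⟨l, hl, hlo, hhi, rfl⟩ | ⟨hopt, rfl⟩)
    · exact ⟨l, hl, Or.inl ⟨hlo, hhi⟩, rfl⟩
    · exact ⟨[], by simp, Or.inr ⟨hopt, rfl⟩, rfl⟩
  · rintro ⟨l, hl, ⟨hlo, hhi⟩ | ⟨hopt, hlen⟩, rfl⟩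
    · exact Or.inl ⟨l, hl, hlo, hhi, rfl⟩
    · exact Or.inr ⟨hopt, by rw [List.length_eq_zero_iff.1 hlen]; rfl⟩

theorem iterLang_mono (h : L ⊆ L') : iterLang L I ⊆ iterLang L' I := by
  intro w hw
  obtain ⟨l, hl, hI, rfl⟩ := mem_iterLang_iff.1 hw
  exact mem_iterLang_iff.2 ⟨l, fun x hx => h (hl x hx), hI, rfl⟩

theorem supported_of_mem_iterLang {s : List σ} (hL : ∀ u ∈ L, u.Supported s)
    (hw : w ∈ iterLang L I) : w.Supported s := by
  obtain ⟨l, hl, -, rfl⟩ := mem_iterLang_iff.1 hw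
  exact supported_listSum fun x hx => hL x (hl x hx)

theorem kset_subset_kset_iterLang : Kset L ⊆ Kset (iterLang L I) := by
  intro p hp w hw
  obtain ⟨l, hl, -, rfl⟩ := mem_iterLang_iff.1 hw
  simp only [listSum_apply]
  exact List.sum_le_sum fun x hx => hp x (hl x hx)

theorem mem_iterLang_of_mem (hI : I = Iv.one ∨ I = Iv.qmark) (hw : w ∈ L) : w ∈ iterLang L I := by
  refine mem_iterLang_iff.2 ⟨[w], by simpa using hw, ?_, ?_⟩
  · rcases hI with rfl | rfl <;> simp [Iv.Mem, Iv.one, Iv.qmark]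
  · funext a
    simp [listSum_apply]

theorem eq_zero_or_mem_of_mem_iterLang (hI : I = Iv.one ∨ I = Iv.qmark)
    (hw : w ∈ iterLang L I) : w = UWord.zero ∨ w ∈ L := by
  obtain ⟨l, hl, hlen, rfl⟩ := mem_iterLang_iff.1 hw
  have hlen : l.length ≤ 1 := by
    rcases hI with rfl | rfl <;> simp [Iv.Mem, Iv.one, Iv.qmark] at hlen <;> omega
  match l, hlen with
  | [], _ => exact Or.inl rfl
  | [x], _ =>
    refine Or.inr ?_
    convert hl x (by simp)
    funext a
    simp [listSum_apply]

theorem mem_iterLang_iplus_of_mem_istar (hw : w ∈ iterLang L Iv.istar) (hw0 : w ≠ UWord.zero) :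
    w ∈ iterLang L Iv.iplus := by
  obtain ⟨l, hl, -, rfl⟩ := mem_iterLang_iff.1 hw
  refine mem_iterLang_iff.2 ⟨l, hl, Or.inl ⟨?_, le_top⟩, rfl⟩
  rcases l with _ | ⟨x, l⟩
  · exact absurd rfl hw0
  · simp [Iv.iplus]

theorem listConcLang_iterLang_istar_subset {α : Type*} (f : α → Set (UWord σ)) (l : List α) :
    listConcLang (fun x => iterLang (f x) Iv.istar) l ⊆
      iterLang {u | ∃ x ∈ l, u ∈ f x} Iv.istar := by
  induction l with
  | nil =>
    rintro w rfl
    exact mem_iterLang_iff.2 ⟨[], by simp, Or.inl ⟨le_rfl, le_top⟩, rfl⟩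
  | cons x l ih =>
    rintro w ⟨w₁, hw₁, w₂, hw₂, rfl⟩
    obtain ⟨l₁, hl₁, -, rfl⟩ := mem_iterLang_iff.1 hw₁
    obtain ⟨l₂, hl₂, -, rfl⟩ := mem_iterLang_iff.1 (ih hw₂)
    refine mem_iterLang_iff.2
      ⟨l₁ ++ l₂, ?_, Or.inl ⟨Nat.zero_le _, le_top⟩, (listSum_append _ _).symm⟩
    intro u hu
    rcases List.mem_append.1 hu with hu | hu
    · exact ⟨x, by simp, hl₁ u hu⟩
    · obtain ⟨y, hy, huy⟩ := hl₂ u hu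
      exact ⟨y, by simp [hy], huy⟩

end IterLang

section ListConcLang

variable {σ : Type*} {α : Type*} {f : α → Set (UWord σ)} {g : α → List σ}

theorem supported_of_mem_listConcLang (hf : ∀ x, ∀ u ∈ f x, u.Supported (g x)) {l : List α}
    {w : UWord σ} (hw : w ∈ listConcLang f l) : w.Supported (l.flatMap g) := by
  induction l generalizing w with
  | nil => rintro a ha; exact absurd (congrFun hw a) ha
  | cons x l ih =>
    obtain ⟨w₁, hw₁, w₂, hw₂, rfl⟩ := hw
    exact (hf x w₁ hw₁).add (ih hw₂)

theorem eq_of_mem_flatMap_of_nodup {l : List α} (hl : (l.flatMap g).Nodup) {x y : α}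
    (hx : x ∈ l) (hy : y ∈ l) {a : σ} (hax : a ∈ g x) (hay : a ∈ g y) : x = y := by
  by_contra hxy
  have : Std.Symm (Function.onFun List.Disjoint g) := ⟨fun _ _ h => h.symm⟩
  exact (List.nodup_flatMap.1 hl).2.forall hx hy hxy hax hay

variable [DecidableEq σ]

theorem restrict_mem_of_mem_listConcLang (hf : ∀ x, ∀ u ∈ f x, u.Supported (g x))
    {l : List α} (hl : (l.flatMap g).Nodup) {w : UWord σ} (hw : w ∈ listConcLang f l) :
    ∀ x ∈ l, w.restrict (g x) ∈ f x := by
  induction l generalizing w with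
  | nil => simp
  | cons x l ih =>
    rw [List.flatMap_cons, List.nodup_append] at hl
    obtain ⟨-, hl, hdisj⟩ := hl
    obtain ⟨w₁, hw₁, w₂, hw₂, rfl⟩ := hw
    have hzero₁ : ∀ a, a ∉ g x → w₁ a = 0 := fun a ha => by_contra fun h => ha (hf x w₁ hw₁ a h)
    have hzero₂ : ∀ a ∈ g x, w₂ a = 0 := fun a ha => by_contra fun h =>
      hdisj a ha a (supported_of_mem_listConcLang hf hw₂ a h) rfl
    intro y hy
    rcases List.mem_cons.1 hy with rfl | hy
    · convert hw₁ using 1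
      funext a
      by_cases ha : a ∈ g y
      · simp [UWord.add, ha, hzero₂ a ha]
      · simp [ha, hzero₁ a ha]
    · convert ih hl hw₂ y hy using 1
      funext a
      by_cases ha : a ∈ g y
      · have hal : a ∈ l.flatMap g := List.mem_flatMap.2 ⟨y, hy, ha⟩
        simp [UWord.add, ha, hzero₁ a fun h => hdisj a h a hal rfl]
      · simp [ha]

theorem mem_listConcLang_of_restrict_mem {l : List α} (hl : (l.flatMap g).Nodup) {w : UWord σ}
    (hres : ∀ x ∈ l, w.restrict (g x) ∈ f x) (hw : w.Supported (l.flatMap g)) :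
    w ∈ listConcLang f l := by
  induction l generalizing w with
  | nil => exact UWord.eq_zero_iff.2 fun a => by_contra fun ha => by simpa using hw a ha
  | cons x l ih =>
    rw [List.flatMap_cons, List.nodup_append] at hl
    obtain ⟨-, hl, hdisj⟩ := hl
    refine ⟨w.restrict (g x), hres x (by simp), w.restrict (l.flatMap g), ?_, ?_⟩
    · refine ih hl (fun y hy => ?_) (UWord.supported_restrict _ _)
      convert hres y (by simp [hy]) using 1
      funext a
      by_cases ha : a ∈ g y
      · simp [ha, List.mem_flatMap.2 ⟨y, hy, ha⟩]
      · simp [ha]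
    · funext a
      by_cases ha : a ∈ g x
      · have hal : a ∉ l.flatMap g := fun hal => hdisj a ha a hal rfl
        simp [UWord.add, ha, hal]
      · by_cases hal : a ∈ l.flatMap g
        · simp [UWord.add, ha, hal]
        · have : w a = 0 := by_contra fun h => by simpa [ha, hal] using hw a h
          simp [UWord.add, ha, hal, this]

theorem mem_listConcLang_iff_of_nodup (hf : ∀ x, ∀ u ∈ f x, u.Supported (g x)) {l : List α}
    (hl : (l.flatMap g).Nodup) {w : UWord σ} :
    w ∈ listConcLang f l ↔ (∀ x ∈ l, w.restrict (g x) ∈ f x) ∧ w.Supported (l.flatMap g) :=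
  ⟨fun hw => ⟨restrict_mem_of_mem_listConcLang hf hl hw, supported_of_mem_listConcLang hf hw⟩,
    fun ⟨hres, hw⟩ => mem_listConcLang_of_restrict_mem hl hres hw⟩

end ListConcLang

namespace Atom

variable {σ : Type*}

def symbols (A : Atom σ) : List σ := A.map Prod.fst

/-- `x ∈ L(A^[n,n])`, see `Atom.isIterate_iff_exists_list`. -/
def IsIterate (A : Atom σ) (n : ℕ) (x : UWord σ) : Prop :=
  (∀ q ∈ A, x q.1 ≤ n ∧ (q.2 = true → x q.1 = n)) ∧ x.Supported (symbols A)

variable {A : Atom σ} {n m : ℕ} {x y : UWord σ}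

theorem fst_mem_symbols {q : σ × Bool} (hq : q ∈ A) : q.1 ∈ symbols A :=
  List.mem_map_of_mem hq

theorem IsIterate.eq_zero (h : IsIterate A 0 x) : x = UWord.zero := by
  refine UWord.eq_zero_iff.2 fun a => by_contra fun ha => ?_
  obtain ⟨q, hq, rfl⟩ := List.mem_map.1 (h.2 a ha)
  exact ha (Nat.le_zero.1 (h.1 q hq).1)

theorem isIterate_zero_zero : IsIterate A 0 (UWord.zero : UWord σ) :=
  ⟨fun _ _ => ⟨le_rfl, fun _ => rfl⟩, UWord.supported_zero _⟩

theorem IsIterate.add (hx : IsIterate A n x) (hy : IsIterate A m y) :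
    IsIterate A (n + m) (x.add y) := by
  refine ⟨fun q hq => ?_, (hx.2.add hy.2).mono fun _ h => (List.mem_append.1 h).elim id id⟩
  obtain ⟨hxq, hxreq⟩ := hx.1 q hq
  obtain ⟨hyq, hyreq⟩ := hy.1 q hq
  exact ⟨Nat.add_le_add hxq hyq, fun h => congrArg₂ (· + ·) (hxreq h) (hyreq h)⟩

/-- The split-off atom word is `min x 1`. -/
theorem IsIterate.exists_add_of_succ (h : IsIterate A (n + 1) x) :
    ∃ y z, IsIterate A 1 y ∧ IsIterate A n z ∧ x = y.add z := by
  refine ⟨fun a => min (x a) 1, fun a => x a - min (x a) 1,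
    ⟨fun q hq => ?_, fun a ha => h.2 a ?_⟩, ⟨fun q hq => ?_, fun a ha => h.2 a ?_⟩,
    funext fun a => ?_⟩
  · exact ⟨min_le_right _ _, fun hq2 => by simp [(h.1 q hq).2 hq2]⟩
  · exact fun h0 => ha (by simp [h0])
  · exact ⟨by have := (h.1 q hq).1; dsimp only; omega, fun hq2 => by simp [(h.1 q hq).2 hq2]⟩
  · exact fun h0 => ha (by simp [h0])
  · exact (Nat.add_sub_cancel' (min_le_left _ _)).symm

theorem IsIterate.mono (h : IsIterate A n x) (hopt : ∀ q ∈ A, q.2 = false) (hnm : n ≤ m) :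
    IsIterate A m x :=
  ⟨fun q hq => ⟨(h.1 q hq).1.trans hnm, fun hq2 => by simp [hopt q hq] at hq2⟩, h.2⟩

/-- Takes the count of a required symbol if there is one, and otherwise a maximal count. -/
theorem exists_isIterate_pivot (hne : A ≠ [])
    (hK : ∀ q ∈ A, q.2 = true → ∀ q' ∈ A, x q'.1 ≤ x q.1) (hx : x.Supported (symbols A)) :
    ∃ b ∈ A, IsIterate A (x b.1) x ∧ ((∃ q ∈ A, q.2 = true) → b.2 = true) := by
  by_cases hreq : ∃ q ∈ A, q.2 = true
  · obtain ⟨b, hb, hb2⟩ := hreq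
    refine ⟨b, hb, ⟨fun q hq => ⟨hK b hb hb2 q hq, fun hq2 => ?_⟩, hx⟩, fun _ => hb2⟩
    exact le_antisymm (hK b hb hb2 q hq) (hK q hq hq2 b hb)
  · obtain ⟨b, hb, hmax⟩ := Set.exists_max_image {q | q ∈ A} (fun q => x q.1) A.finite_toSet
      (List.exists_mem_of_ne_nil A hne)
    refine ⟨b, hb, ⟨fun q hq => ⟨hmax q hq, ?_⟩, hx⟩, fun h => absurd h hreq⟩
    exact fun hq2 => absurd ⟨q, hq, hq2⟩ hreq

theorem exists_isIterate (hK : ∀ q ∈ A, q.2 = true → ∀ q' ∈ A, x q'.1 ≤ x q.1)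
    (hx : x.Supported (symbols A)) : ∃ n, IsIterate A n x := by
  rcases eq_or_ne A [] with rfl | hne
  · exact ⟨0, by simp, hx⟩
  · obtain ⟨b, -, hb, -⟩ := exists_isIterate_pivot hne hK hx
    exact ⟨_, hb⟩

variable [DecidableEq σ]

theorem restrict_mem_atomEntryLang_iff {a : σ} {b : Bool} :
    x.restrict [a] ∈ atomEntryLang (a, b) ↔ x a ≤ 1 ∧ (b = true → x a = 1) := by
  have h₁ : x.restrict [a] = UWord.single a ↔ x a = 1 :=
    ⟨fun h => by simpa [UWord.single] using congrFun h a,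
      fun h => funext fun c => by by_cases hc : c = a <;> simp [UWord.single, hc, h]⟩
  have h₀ : x.restrict [a] = UWord.zero ↔ x a = 0 :=
    ⟨fun h => by simpa [UWord.zero] using congrFun h a,
      fun h => funext fun c => by by_cases hc : c = a <;> simp [UWord.zero, hc, h]⟩
  cases b
  · simp only [atomEntryLang, Bool.false_eq_true, if_false, Set.mem_insert_iff,
      Set.mem_singleton_iff, h₁, h₀, false_implies, and_true]
    omega
  · simp only [atomEntryLang, if_true, Set.mem_singleton_iff, h₁, true_implies]
    constructor <;> intro h <;> omega

theorem supported_of_mem_atomEntryLang {q : σ × Bool} (hx : x ∈ atomEntryLang q) :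
    x.Supported [q.1] := by
  have : x = UWord.single q.1 ∨ x = UWord.zero := by
    unfold atomEntryLang at hx
    split_ifs at hx <;> simp_all
  rcases this with rfl | rfl
  · intro a ha
    by_contra h
    simp_all [UWord.single]
  · exact UWord.supported_zero _

theorem supported_of_mem_lang (hx : x ∈ Atom.lang A) : x.Supported (symbols A) := by
  rw [symbols, List.map_eq_flatMap]
  exact supported_of_mem_listConcLang (fun _ _ => supported_of_mem_atomEntryLang) hx

theorem mem_lang_iff (hA : (symbols A).Nodup) : x ∈ Atom.lang A ↔ IsIterate A 1 x := by
  rw [symbols, List.map_eq_flatMap] at hA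
  rw [Atom.lang, mem_listConcLang_iff_of_nodup (g := fun q => [q.1])
    (fun _ _ => supported_of_mem_atomEntryLang) hA, IsIterate, symbols, List.map_eq_flatMap]
  exact and_congr_left' (forall₂_congr fun _ _ => restrict_mem_atomEntryLang_iff)

theorem isIterate_iff_exists_list (hA : (symbols A).Nodup) :
    IsIterate A n x ↔ ∃ l : List (UWord σ), (∀ y ∈ l, y ∈ Atom.lang A) ∧ l.length = n ∧
      x = listSum l := by
  constructor
  · induction n generalizing x with
    | zero => exact fun h => ⟨[], by simp, rfl, h.eq_zero⟩
    | succ n ih =>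
      intro h
      obtain ⟨y, z, hy, hz, rfl⟩ := h.exists_add_of_succ
      obtain ⟨l, hl, hlen, rfl⟩ := ih hz
      refine ⟨y :: l, ?_, by simp [hlen], rfl⟩
      rintro u (_ | ⟨_, hu⟩)
      exacts [(mem_lang_iff hA).2 hy, hl u hu]
  · rintro ⟨l, hl, rfl, rfl⟩
    induction l with
    | nil => exact isIterate_zero_zero
    | cons y l ih =>
      rw [List.length_cons, Nat.add_comm]
      exact ((mem_lang_iff hA).1 (hl y (by simp))).add (ih fun u hu => hl u (by simp [hu]))

theorem mem_iterLang_iff (hA : (symbols A).Nodup) {J : Iv} :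
    x ∈ iterLang (Atom.lang A) J ↔ ∃ n, J.Mem n ∧ IsIterate A n x := by
  simp only [_root_.mem_iterLang_iff, isIterate_iff_exists_list hA]
  constructor
  · rintro ⟨l, hl, hJ, rfl⟩
    exact ⟨l.length, hJ, l, hl, rfl, rfl⟩
  · rintro ⟨_, hJ, l, hl, rfl, rfl⟩
    exact ⟨l, hl, hJ, rfl⟩

end Atom

namespace SatTuple

variable {σ : Type*} {L : Set (UWord σ)} {w : UWord σ}

theorem of_mem (hw : w ∈ L) : SatTuple L w :=
  ⟨fun _ hp => hp w hw, fun _ => ⟨w, hw, rfl⟩, fun _ hX => hX w hw, fun _ hp => hp w hw⟩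

theorem congr {L' : Set (UWord σ)} (hC : Cset L = Cset L') (hN : Nset L = Nset L')
    (hP : Pset L = Pset L') (hK : Kset L = Kset L') : SatTuple L w ↔ SatTuple L' w := by
  rw [SatTuple, SatTuple, hC, hN, hP, hK]

theorem nonempty (hw : SatTuple L w) : L.Nonempty := by
  by_contra hL
  obtain ⟨_, h, -⟩ := hw.2.2.1 ∅ fun u hu => absurd ⟨u, hu⟩ hL
  exact h

theorem zero_mem (hw : SatTuple L UWord.zero) : UWord.zero ∈ L := by
  by_contra h0
  obtain ⟨_, -, h⟩ := hw.2.2.1 Set.univ fun u hu =>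
    (UWord.exists_ne_zero_of_ne_zero fun h => h0 (h ▸ hu)).imp fun _ ha => ⟨trivial, ha⟩
  exact h rfl

theorem supported {s : List σ} (hL : ∀ u ∈ L, u.Supported s) (hw : SatTuple L w) :
    w.Supported s := fun a ha =>
  let ⟨u, hu, hua⟩ := hw.2.1 a
  hL u hu a (hua ▸ ha)

theorem restrict [DecidableEq σ] {M : Set (UWord σ)} {s : List σ}
    (hLM : ∀ u ∈ L, u.restrict s ∈ M) (hw : SatTuple L w) : SatTuple M (w.restrict s) := by
  refine ⟨?_, fun a => ?_, fun X hX => ?_, ?_⟩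
  · rintro ⟨x, y⟩ hxy ⟨hx, hy⟩
    simp only [UWord.restrict_apply, ne_eq, ite_eq_right_iff, not_forall] at hx hy
    refine hw.1 (x, y) (fun u hu ⟨hux, huy⟩ => hxy _ (hLM u hu) ?_) ⟨hx.2, hy.2⟩
    simp [hx.1, hy.1, hux, huy]
  · by_cases ha : a ∈ s
    · obtain ⟨u, hu, hua⟩ := hw.2.1 a
      exact ⟨u.restrict s, hLM u hu, by simpa [ha] using hua⟩
    · obtain ⟨u, hu⟩ := hw.nonempty
      exact ⟨u.restrict s, hLM u hu, by simp [ha]⟩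
  · have hXs : {a | a ∈ X ∧ a ∈ s} ∈ Pset L := fun u hu => by
      obtain ⟨a, haX, ha⟩ := hX _ (hLM u hu)
      by_cases has : a ∈ s
      · exact ⟨a, ⟨haX, has⟩, by simpa [has] using ha⟩
      · simp [has] at ha
    obtain ⟨a, ⟨haX, has⟩, ha⟩ := hw.2.2.1 _ hXs
    exact ⟨a, haX, by simpa [has] using ha⟩
  · rintro ⟨x, y⟩ hxy
    show w.restrict s y ≤ w.restrict s x
    by_cases hy : y ∈ s
    · by_cases hx : x ∈ s
      · simpa [hx, hy] using hw.2.2.2 (x, y) fun u hu => by simpa [hx, hy] using hxy _ (hLM u hu)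
      · obtain ⟨u, hu, huy⟩ := hw.2.1 y
        have := hxy _ (hLM u hu)
        simp only [UWord.restrict_apply, hx, hy, if_true, if_false] at this huy ⊢
        omega
    · simp [hy]

end SatTuple

namespace Clause

variable {σ : Type*}

def symbols (D : Clause σ) : List σ := D.flatMap fun e => Atom.symbols e.1

theorem nodup_atom {D : Clause σ} (hD : (symbols D).Nodup) {e : Atom σ × Iv} (he : e ∈ D) :
    (Atom.symbols e.1).Nodup :=
  (List.nodup_flatMap.1 hD).1 e he

variable [DecidableEq σ] {D : Clause σ} {I : Iv} {u v : UWord σ} {e : Atom σ × Iv}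

theorem supported_of_mem_lang (hu : u ∈ Clause.lang D) : u.Supported (symbols D) := by
  obtain ⟨e, he, hu⟩ := hu
  exact (supported_of_mem_iterLang (fun _ => Atom.supported_of_mem_lang) hu).mono
    fun _ ha => List.mem_flatMap.2 ⟨e, he, ha⟩

theorem supported_of_mem_iterLang_lang (hu : u ∈ iterLang (Clause.lang D) I) :
    u.Supported (symbols D) :=
  supported_of_mem_iterLang (fun _ => supported_of_mem_lang) hu

theorem mem_iterLang_atom_of_mem_lang (hD : (symbols D).Nodup) (hu : u ∈ Clause.lang D)
    (he : e ∈ D) {a : σ} (ha : a ∈ Atom.symbols e.1) (hua : u a ≠ 0) :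
    u ∈ iterLang (Atom.lang e.1) e.2 := by
  obtain ⟨e', he', hu'⟩ := hu
  have ha' := supported_of_mem_iterLang (fun _ => Atom.supported_of_mem_lang) hu' a hua
  rwa [← eq_of_mem_flatMap_of_nodup hD he' he ha' ha]

theorem kset_iterLang (hD : (symbols D).Nodup) (he : e ∈ D) {q q' : σ × Bool} (hq : q ∈ e.1)
    (hq2 : q.2 = true) (hq' : q' ∈ e.1) : (q.1, q'.1) ∈ Kset (iterLang (Clause.lang D) I) := by
  refine kset_subset_kset_iterLang fun u hu => ?_
  show u q'.1 ≤ u q.1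
  by_cases hu0 : u q'.1 = 0
  · simp [hu0]
  obtain ⟨n, -, hn⟩ := (Atom.mem_iterLang_iff (nodup_atom hD he)).1
    (mem_iterLang_atom_of_mem_lang hD hu he (Atom.fst_mem_symbols hq') hu0)
  exact ((hn.1 q hq).2 hq2).symm ▸ (hn.1 q' hq').1

theorem cset_iterLang (hD : (symbols D).Nodup) (hI : I = Iv.one ∨ I = Iv.qmark) (he : e ∈ D)
    {c a : σ} (hc : c ∈ Atom.symbols e.1) (ha : a ∉ Atom.symbols e.1) :
    (c, a) ∈ Cset (iterLang (Clause.lang D) I) := by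
  rintro u hu ⟨huc, hua⟩
  rcases eq_zero_or_mem_of_mem_iterLang hI hu with rfl | hu
  · exact huc rfl
  · exact ha (supported_of_mem_iterLang (fun _ => Atom.supported_of_mem_lang)
      (mem_iterLang_atom_of_mem_lang hD hu he hc huc) a hua)

theorem mem_iterLang_of_satTuple_of_single (hD : (symbols D).Nodup)
    (hI : I = Iv.one ∨ I = Iv.qmark) (hv : SatTuple (iterLang (Clause.lang D) I) v) :
    v ∈ iterLang (Clause.lang D) I := by
  by_cases hv0 : v = UWord.zero
  · subst hv0
    exact hv.zero_mem
  obtain ⟨c, hc⟩ := UWord.exists_ne_zero_of_ne_zero hv0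
  obtain ⟨e, he, hce⟩ :=
    List.mem_flatMap.1 (hv.supported (fun _ => supported_of_mem_iterLang_lang) c hc)
  have hA := nodup_atom hD he
  have hvA : v.Supported (Atom.symbols e.1) := fun a ha =>
    by_contra fun haA => hv.1 (c, a) (cset_iterLang hD hI he hce haA) ⟨hc, ha⟩
  obtain ⟨qc, hqc, rfl⟩ := List.mem_map.1 hce
  obtain ⟨b, hb, hvb, hbreq⟩ := Atom.exists_isIterate_pivot (List.ne_nil_of_mem hqc)
    (fun q hq hq2 q' hq' => hv.2.2.2 _ (kset_iterLang hD he hq hq2 hq')) hvA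
  have hvb0 : v b.1 ≠ 0 := fun h0 => hc (Nat.le_zero.1 (h0 ▸ (hvb.1 qc hqc).1))
  obtain ⟨u, hu, hub⟩ : ∃ u ∈ iterLang (Clause.lang D) I, u b.1 = v b.1 := hv.2.1 b.1
  have hub0 : u b.1 ≠ 0 := hub ▸ hvb0
  have huA := mem_iterLang_atom_of_mem_lang hD
    ((eq_zero_or_mem_of_mem_iterLang hI hu).resolve_left fun h => hub0 (h ▸ rfl)) he
    (Atom.fst_mem_symbols hb) hub0
  obtain ⟨n, hn, hun⟩ := (Atom.mem_iterLang_iff hA).1 huA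
  have hvn : Atom.IsIterate e.1 n v := by
    cases hb2 : b.2
    · refine hvb.mono (fun q hq => ?_) (hub ▸ (hun.1 b hb).1)
      by_contra h
      simp [hbreq ⟨q, hq, by simpa using h⟩] at hb2
    · rwa [← hub.symm.trans ((hun.1 b hb).2 hb2)]
  exact mem_iterLang_of_mem hI ⟨e, he, (Atom.mem_iterLang_iff hA).2 ⟨n, hn, hvn⟩⟩

theorem mem_iterLang_of_satTuple_of_simple (hD : (symbols D).Nodup) (hs : Clause.Simple D)
    (hI : I = Iv.iplus ∨ I = Iv.istar) (hv : SatTuple (iterLang (Clause.lang D) I) v) :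
    v ∈ iterLang (Clause.lang D) I := by
  by_cases hv0 : v = UWord.zero
  · subst hv0
    exact hv.zero_mem
  have hatoms : ∀ e ∈ D, v.restrict (Atom.symbols e.1) ∈ iterLang (Atom.lang e.1) Iv.istar := by
    intro e he
    obtain ⟨n, hn⟩ := Atom.exists_isIterate (x := v.restrict (Atom.symbols e.1))
      (fun q hq hq2 q' hq' => by
        simpa [Atom.fst_mem_symbols hq, Atom.fst_mem_symbols hq'] using
          hv.2.2.2 _ (kset_iterLang hD he hq hq2 hq'))
      (UWord.supported_restrict _ _)
    exact (Atom.mem_iterLang_iff (nodup_atom hD he)).2 ⟨n, Or.inl ⟨Nat.zero_le _, le_top⟩, hn⟩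
  have hconc : v ∈ listConcLang (fun e => iterLang (Atom.lang e.1) Iv.istar) D := by
    refine (mem_listConcLang_iff_of_nodup (g := fun e : Atom σ × Iv => Atom.symbols e.1) ?_ hD).2
      ⟨hatoms, hv.supported fun _ => supported_of_mem_iterLang_lang⟩
    exact fun _ _ hu => supported_of_mem_iterLang (fun _ => Atom.supported_of_mem_lang) hu
  have hstar : v ∈ iterLang (Clause.lang D) Iv.istar := by
    refine iterLang_mono ?_ (listConcLang_iterLang_istar_subset _ D hconc)
    rintro u ⟨e, he, hu⟩
    exact ⟨e, he, mem_iterLang_of_mem (hs e he) hu⟩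
  rcases hI with rfl | rfl
  exacts [mem_iterLang_iplus_of_mem_istar hstar hv0, hstar]

end Clause

namespace DIME

variable {σ : Type*} [DecidableEq σ] {E : DIME σ} {w : UWord σ}

theorem mem_lang_iff (hE : E.symbols.Nodup) :
    w ∈ E.lang ↔ (∀ p ∈ E.clauses, w.restrict (Clause.symbols p.1) ∈ iterLang (Clause.lang p.1) p.2)
      ∧ w.Supported E.symbols :=
  mem_listConcLang_iff_of_nodup (g := fun p : Clause σ × Iv => Clause.symbols p.1)
    (fun _ _ hu => Clause.supported_of_mem_iterLang_lang hu) hE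

theorem mem_lang_of_satTuple (hE : E.WF) (hw : SatTuple E.lang w) : w ∈ E.lang := by
  refine (mem_lang_iff hE.2).2 ⟨fun p hp => ?_, hw.supported fun _ hu => ?_⟩
  · have hD : (Clause.symbols p.1).Nodup := (List.nodup_flatMap.1 hE.2).1 p hp
    have hwp := hw.restrict fun u hu => ((mem_lang_iff hE.2).1 hu).1 p hp
    rcases hE.1 p hp with ⟨hs, hI⟩ | hI
    · exact Clause.mem_iterLang_of_satTuple_of_simple hD hs hI hwp
    · exact Clause.mem_iterLang_of_satTuple_of_single hD hI hwp
  · exact supported_of_mem_listConcLang (fun _ _ hu => Clause.supported_of_mem_iterLang_lang hu) hu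

end DIME

theorem statement5_general {σ : Type} [DecidableEq σ]
    (E E' : DIME σ) (hE : E.WF) (hE' : E'.WF) :
    DIME.lang E = DIME.lang E' ↔
      (Cset (DIME.lang E) = Cset (DIME.lang E') ∧
       Nset (DIME.lang E) = Nset (DIME.lang E') ∧
       Pset (DIME.lang E) = Pset (DIME.lang E') ∧
       Kset (DIME.lang E) = Kset (DIME.lang E')) := by
  refine ⟨fun h => by rw [h]; exact ⟨rfl, rfl, rfl, rfl⟩, fun ⟨hC, hN, hP, hK⟩ => ?_⟩
  ext w
  have hsat := SatTuple.congr (w := w) hC hN hP hK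
  exact ⟨fun hw => DIME.mem_lang_of_satTuple hE' (hsat.1 (.of_mem hw)),
    fun hw => DIME.mem_lang_of_satTuple hE (hsat.2 (.of_mem hw))⟩

/-- For any two DIMEs `E` and `E'`: `L(E) = L(E')` if and only if
`Δ_E = Δ_{E'}` (i.e. `C_E = C_{E'}`, `N_E = N_{E'}`, `P_E = P_{E'}` and `K_E = K_{E'}`). -/
theorem statement5 {σ : Type} [DecidableEq σ] [Fintype σ]
    (E E' : DIME σ) (hE : E.WF) (hE' : E'.WF) :
    DIME.lang E = DIME.lang E' ↔
      (Cset (DIME.lang E) = Cset (DIME.lang E') ∧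
       Nset (DIME.lang E) = Nset (DIME.lang E') ∧
       Pset (DIME.lang E) = Pset (DIME.lang E') ∧
       Kset (DIME.lang E) = Kset (DIME.lang E')) :=
  statement5_general E E' hE hE'
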